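/- Let K be a nonempty closed subset of ℝⁿ and define ρ(y) = sup_{x ∈ K} (⟨y, x⟩ − ‖x‖₂²/2). Then ρ(y) = (‖y‖₂² − dist(y, K)²)/2 for all y ∈ ℝⁿ, ρ is a convex real-valued function on ℝⁿ, and every point x* ∈ argmin_{x ∈ K} ‖y − x‖₂² is a subgradient of ρ at y, i.e. ρ(z) ≥ ρ(y) + ⟨x*, z − y⟩ for all z ∈ ℝⁿ. Consequently, if ρ is differentiable at y then the metric projection of y onto K is unique and equals ∇ρ(y). -/
import Mathlib


open MeasureTheory Metric
open scoped RealInnerProductSpace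

/-- The convex function `ρ(y) = sup_{x ∈ K} (⟨y, x⟩ - ‖x‖²/2)`. -/
noncomputable def rhoFun (n : ℕ) (K : Set (EuclideanSpace ℝ (Fin n)))
    (y : EuclideanSpace ℝ (Fin n)) : ℝ :=
  sSup ((fun x => ⟪y, x⟫ - ‖x‖ ^ 2 / 2) '' K)

section aux

variable {n : ℕ}

lemma rho_key (y x : EuclideanSpace ℝ (Fin n)) :
    ⟪y, x⟫ - ‖x‖ ^ 2 / 2 = (‖y‖ ^ 2 - ‖y - x‖ ^ 2) / 2 := by
  have h := norm_sub_sq_real y x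
  linarith

lemma rho_isGreatest (K : Set (EuclideanSpace ℝ (Fin n))) (y xstar : EuclideanSpace ℝ (Fin n))
    (hx : xstar ∈ K) (hd : dist y xstar = infDist y K) :
    IsGreatest ((fun x => ⟪y, x⟫ - ‖x‖ ^ 2 / 2) '' K) (⟪y, xstar⟫ - ‖xstar‖ ^ 2 / 2) := by
  constructor
  · exact ⟨xstar, hx, rfl⟩
  · rintro _ ⟨x, hxK, rfl⟩
    show ⟪y, x⟫ - ‖x‖ ^ 2 / 2 ≤ _
    rw [rho_key, rho_key]
    have h1 : infDist y K ≤ dist y x := infDist_le_dist_of_mem hxK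
    have h4 : ‖y - xstar‖ ≤ ‖y - x‖ := by
      rw [← dist_eq_norm, ← dist_eq_norm, hd]; exact h1
    have h5 : ‖y - xstar‖ ^ 2 ≤ ‖y - x‖ ^ 2 :=
      pow_le_pow_left₀ (norm_nonneg _) h4 2
    linarith

lemma rho_eq_of_min (K : Set (EuclideanSpace ℝ (Fin n))) (y xstar : EuclideanSpace ℝ (Fin n))
    (hx : xstar ∈ K) (hd : dist y xstar = infDist y K) :
    rhoFun n K y = ⟪y, xstar⟫ - ‖xstar‖ ^ 2 / 2 :=
  (rho_isGreatest K y xstar hx hd).csSup_eq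

lemma rho_subgrad (K : Set (EuclideanSpace ℝ (Fin n))) (hne : K.Nonempty) (hcl : IsClosed K)
    (y xstar : EuclideanSpace ℝ (Fin n)) (hx : xstar ∈ K) (hd : dist y xstar = infDist y K)
    (z : EuclideanSpace ℝ (Fin n)) :
    rhoFun n K y + ⟪xstar, z - y⟫ ≤ rhoFun n K z := by
  obtain ⟨w, hwK, hw⟩ := hcl.exists_infDist_eq_dist hne z
  have hbdd : BddAbove ((fun x => ⟪z, x⟫ - ‖x‖ ^ 2 / 2) '' K) :=
    ⟨_, (rho_isGreatest K z w hwK hw.symm).2⟩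
  have hle : ⟪z, xstar⟫ - ‖xstar‖ ^ 2 / 2 ≤ rhoFun n K z :=
    le_csSup hbdd ⟨xstar, hx, rfl⟩
  rw [rho_eq_of_min K y xstar hx hd]
  have : ⟪y, xstar⟫ + ⟪xstar, z - y⟫ = ⟪z, xstar⟫ := by
    rw [inner_sub_right, real_inner_comm xstar z, real_inner_comm xstar y]
    ring
  linarith

end aux

/-- **The convex potential of the metric projection.**
For a nonempty closed `K ⊆ ℝⁿ`: `ρ(y) = (‖y‖² - dist(y,K)²)/2`, `ρ` is convex, every point of
`K` nearest to `y` is a subgradient of `ρ` at `y`, and if `ρ` is differentiable at `y` then the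
metric projection of `y` onto `K` is unique and equals `∇ρ(y)`. -/
theorem rho_eq_and_convex_and_subgradient
    (n : ℕ) (K : Set (EuclideanSpace ℝ (Fin n)))
    (hne : K.Nonempty) (hcl : IsClosed K) :
    (∀ y, rhoFun n K y = (‖y‖ ^ 2 - (infDist y K) ^ 2) / 2) ∧
    ConvexOn ℝ Set.univ (rhoFun n K) ∧
    (∀ y xstar, xstar ∈ K → dist y xstar = infDist y K →
      ∀ z, rhoFun n K y + ⟪xstar, z - y⟫ ≤ rhoFun n K z) ∧
    (∀ y, DifferentiableAt ℝ (rhoFun n K) y →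
      (gradient (rhoFun n K) y ∈ K ∧
        dist y (gradient (rhoFun n K) y) = infDist y K ∧
        ∀ x, x ∈ K → dist y x = infDist y K → x = gradient (rhoFun n K) y)) := by
  -- gradient identification: any minimizer equals the gradient
  have hgrad : ∀ y, DifferentiableAt ℝ (rhoFun n K) y →
      ∀ xstar, xstar ∈ K → dist y xstar = infDist y K → xstar = gradient (rhoFun n K) y := by
    intro y hdiff xstar hx hd
    set φ : EuclideanSpace ℝ (Fin n) → ℝ := fun z => rhoFun n K z - ⟪xstar, z⟫ with hφ
    have hinner : (fun z : EuclideanSpace ℝ (Fin n) => ⟪xstar, z⟫)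
        = fun z => (innerSL ℝ xstar : EuclideanSpace ℝ (Fin n) →L[ℝ] ℝ) z := rfl
    have hdinner : DifferentiableAt ℝ (fun z : EuclideanSpace ℝ (Fin n) => ⟪xstar, z⟫) y := by
      rw [hinner]; exact (innerSL ℝ xstar).differentiableAt
    have hmin : IsLocalMin φ y := by
      apply IsMinOn.isLocalMin (s := Set.univ) _ (Filter.univ_mem)
      intro z _
      have := rho_subgrad K hne hcl y xstar hx hd z
      have h2 : ⟪xstar, z - y⟫ = ⟪xstar, z⟫ - ⟪xstar, y⟫ := inner_sub_right _ _ _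
      simp only [φ, Set.mem_setOf_eq]
      linarith
    have hdφ : DifferentiableAt ℝ φ y := hdiff.sub hdinner
    have hfd : fderiv ℝ φ y = 0 := hmin.fderiv_eq_zero
    have hfsub : fderiv ℝ φ y = fderiv ℝ (rhoFun n K) y
        - fderiv ℝ (fun z : EuclideanSpace ℝ (Fin n) => ⟪xstar, z⟫) y :=
      fderiv_sub hdiff hdinner
    have hfi : fderiv ℝ (fun z : EuclideanSpace ℝ (Fin n) => ⟪xstar, z⟫) y
        = (innerSL ℝ xstar : EuclideanSpace ℝ (Fin n) →L[ℝ] ℝ) := by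
      rw [hinner]; exact (innerSL ℝ xstar).fderiv
    have hfr : fderiv ℝ (rhoFun n K) y = (innerSL ℝ xstar) := by
      rw [hfi] at hfsub
      have := hfsub.symm.trans hfd
      rwa [sub_eq_zero] at this
    have hHG : HasGradientAt (rhoFun n K) xstar y := by
      rw [hasGradientAt_iff_hasFDerivAt]
      have : (InnerProductSpace.toDual ℝ (EuclideanSpace ℝ (Fin n))) xstar
          = (innerSL ℝ xstar) := rfl
      rw [this, ← hfr]
      exact hdiff.hasFDerivAt
    exact hHG.gradient.symm
  refine ⟨?_, ?_, fun y xstar hx hd z => rho_subgrad K hne hcl y xstar hx hd z, ?_⟩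
  · intro y
    obtain ⟨xstar, hx, hd⟩ := hcl.exists_infDist_eq_dist hne y
    rw [rho_eq_of_min K y xstar hx hd.symm, rho_key, hd, dist_eq_norm]
  · constructor
    · exact convex_univ
    · intro y _ z _ a b ha hb hab
      obtain ⟨w, hwK, hw⟩ := hcl.exists_infDist_eq_dist hne (a • y + b • z)
      rw [rho_eq_of_min K _ w hwK hw.symm]
      have hby : BddAbove ((fun x => ⟪y, x⟫ - ‖x‖ ^ 2 / 2) '' K) := by
        obtain ⟨u, huK, hu⟩ := hcl.exists_infDist_eq_dist hne y
        exact ⟨_, (rho_isGreatest K y u huK hu.symm).2⟩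
      have hbz : BddAbove ((fun x => ⟪z, x⟫ - ‖x‖ ^ 2 / 2) '' K) := by
        obtain ⟨u, huK, hu⟩ := hcl.exists_infDist_eq_dist hne z
        exact ⟨_, (rho_isGreatest K z u huK hu.symm).2⟩
      have h1 : ⟪y, w⟫ - ‖w‖ ^ 2 / 2 ≤ rhoFun n K y := le_csSup hby ⟨w, hwK, rfl⟩
      have h2 : ⟪z, w⟫ - ‖w‖ ^ 2 / 2 ≤ rhoFun n K z := le_csSup hbz ⟨w, hwK, rfl⟩
      have hsplit : ⟪a • y + b • z, w⟫ - ‖w‖ ^ 2 / 2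
          = a * (⟪y, w⟫ - ‖w‖ ^ 2 / 2) + b * (⟪z, w⟫ - ‖w‖ ^ 2 / 2) := by
        rw [inner_add_left, real_inner_smul_left, real_inner_smul_left]
        nlinarith [hab]
      rw [hsplit]
      have := mul_le_mul_of_nonneg_left h1 ha
      have := mul_le_mul_of_nonneg_left h2 hb
      simp only [smul_eq_mul]
      linarith
  · intro y hdiff
    obtain ⟨xstar, hx, hd⟩ := hcl.exists_infDist_eq_dist hne y
    have heq := hgrad y hdiff xstar hx hd.symm
    refine ⟨heq ▸ hx, heq ▸ hd.symm, fun x hxK hxd => hgrad y hdiff x hxK hxd⟩
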